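/- arXiv:2301.10073 — 3 statements merged into one kernel-verified Lean document; each statement's English description precedes it below -/
import Mathlib

section
/- Let B be a C*-algebra and A ⊆ B a closed *-subalgebra satisfying the ideal intersection property. Then for every closed two-sided ideal J of B, Ann_B(⟨J ∩ A⟩_B) = Ann_B(J), where ⟨J ∩ A⟩_B is the closed two-sided ideal of B generated by J ∩ A. -/
open Pointwise

variable {B : Type*} [NonUnitalCStarAlgebra B]

/-- Closed linear span of a subset of `B`. -/
def clSpan (S : Set B) : Set B := closure (Submodule.span ℂ S : Set B)

/-- `S` is `B`-invariant if `[SB] = [BS]`. -/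
def BInvariant (S : Set B) : Prop :=
  clSpan (S * (Set.univ : Set B)) = clSpan ((Set.univ : Set B) * S)

/-- The closed two-sided ideal of `B` generated by `S`, namely `[BSB]`. -/
def idealGen (S : Set B) : Set B :=
  clSpan ((Set.univ : Set B) * S * (Set.univ : Set B))

/-- Two-sided annihilator of `S` computed in `B`. -/
def annB (S : Set B) : Set B := {x | ∀ s ∈ S, x * s = 0 ∧ s * x = 0}

/-- Two-sided annihilator of `S` computed inside the subset `A ⊆ B`. -/
def annIn (A S : Set B) : Set B := {x ∈ A | ∀ s ∈ S, x * s = 0 ∧ s * x = 0}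

/-- A closed *-subalgebra of `B`, regarded as a subset. -/
structure ClosedStarSubalgebra (A : Set B) : Prop where
  isClosed : IsClosed A
  zero_mem : (0 : B) ∈ A
  add_mem : ∀ ⦃x y : B⦄, x ∈ A → y ∈ A → x + y ∈ A
  smul_mem : ∀ (c : ℂ) ⦃x : B⦄, x ∈ A → c • x ∈ A
  mul_mem : ∀ ⦃x y : B⦄, x ∈ A → y ∈ A → x * y ∈ A
  star_mem : ∀ ⦃x : B⦄, x ∈ A → star x ∈ A

/-- A norm-closed two-sided ideal of `B`. -/
structure ClosedTwoSidedIdeal (J : Set B) : Prop where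
  isClosed : IsClosed J
  zero_mem : (0 : B) ∈ J
  add_mem : ∀ ⦃x y : B⦄, x ∈ J → y ∈ J → x + y ∈ J
  smul_mem : ∀ (c : ℂ) ⦃x : B⦄, x ∈ J → c • x ∈ J
  mul_mem_left : ∀ (a : B) ⦃x : B⦄, x ∈ J → a * x ∈ J
  mul_mem_right : ∀ (a : B) ⦃x : B⦄, x ∈ J → x * a ∈ J

/-- A norm-closed two-sided ideal of the subalgebra `A ⊆ B`. -/
structure IdealOf (A J : Set B) : Prop where
  subset : J ⊆ A
  isClosed : IsClosed J
  zero_mem : (0 : B) ∈ J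
  add_mem : ∀ ⦃x y : B⦄, x ∈ J → y ∈ J → x + y ∈ J
  smul_mem : ∀ (c : ℂ) ⦃x : B⦄, x ∈ J → c • x ∈ J
  mul_mem_left : ∀ ⦃a : B⦄, a ∈ A → ∀ ⦃x : B⦄, x ∈ J → a * x ∈ J
  mul_mem_right : ∀ ⦃a : B⦄, a ∈ A → ∀ ⦃x : B⦄, x ∈ J → x * a ∈ J

/-- The ideal intersection property: every nonzero closed two-sided ideal of `B`
meets `A` nontrivially. -/
def IdealIntersectionProperty (A : Set B) : Prop :=
  ∀ J : Set B, ClosedTwoSidedIdeal J → J ≠ {0} → J ∩ A ≠ {0}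

/-- Axiom (inv): `J ∩ A` is `B`-invariant for every closed two-sided ideal `J` of `B`. -/
def AxiomInv (A : Set B) : Prop :=
  ∀ J : Set B, ClosedTwoSidedIdeal J → BInvariant (J ∩ A)

/-- A regular ideal of `B`. -/
def RegularIdealB (J : Set B) : Prop :=
  ClosedTwoSidedIdeal J ∧ annB (annB J) = J

/-- A regular ideal of the subalgebra `A`. -/
def RegularIdealIn (A I : Set B) : Prop :=
  IdealOf A I ∧ annIn A (annIn A I) = I

/-- A normalizer of `A` in `B`. -/
def IsNormalizer (A : Set B) (n : B) : Prop :=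
  (∀ a ∈ A, star n * a * n ∈ A) ∧ (∀ a ∈ A, n * a * star n ∈ A)

/-- `A` contains an approximate unit for `B`. -/
def ContainsApproxUnit (A : Set B) : Prop :=
  ∃ (ι : Type) (l : Filter ι) (e : ι → B), l.NeBot ∧ (∀ i, e i ∈ A) ∧
    ∀ b : B, Filter.Tendsto (fun i => e i * b) l (nhds b) ∧
      Filter.Tendsto (fun i => b * e i) l (nhds b)

/-- `A` is a regular subalgebra of `B`: the normalizers span a dense subspace of
`B` and `A` contains an approximate unit for `B`. -/
def RegularSubalgebra (A : Set B) : Prop :=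
  ClosedStarSubalgebra A ∧ clSpan {n : B | IsNormalizer A n} = Set.univ ∧
    ContainsApproxUnit A

lemma isClosed_annB (S : Set B) : IsClosed (annB S) := by
  have : annB S = ⋂ s ∈ S, ({x : B | x * s = 0} ∩ {x : B | s * x = 0}) := by
    ext x
    simp only [annB, Set.mem_setOf_eq, Set.mem_iInter, Set.mem_inter_iff]
  rw [this]
  refine isClosed_biInter fun s _ => IsClosed.inter ?_ ?_
  · exact isClosed_eq (continuous_id.mul continuous_const) continuous_const
  · exact isClosed_eq (continuous_const.mul continuous_id) continuous_const

lemma clSpan_subset {S T : Set B} (h0 : (0:B) ∈ T)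
    (hadd : ∀ ⦃x y : B⦄, x ∈ T → y ∈ T → x + y ∈ T)
    (hsmul : ∀ (c : ℂ) ⦃x : B⦄, x ∈ T → c • x ∈ T)
    (hclosed : IsClosed T) (hST : S ⊆ T) : clSpan S ⊆ T := by
  let T' : Submodule ℂ B :=
    { carrier := T
      zero_mem' := h0
      add_mem' := fun hx hy => hadd hx hy
      smul_mem' := fun c x hx => hsmul c hx }
  refine closure_minimal ?_ hclosed
  exact fun x hx => (Submodule.span_le (p := T')).mpr hST hx

lemma idealGen_mul_left {S : Set B} (b : B) {y : B} (hy : y ∈ idealGen S) :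
    b * y ∈ idealGen S := by
  have hm : Set.MapsTo (fun z => b * z)
      (Submodule.span ℂ ((Set.univ : Set B) * S * Set.univ) : Set B)
      (Submodule.span ℂ ((Set.univ : Set B) * S * Set.univ) : Set B) := by
    let W : Submodule ℂ B :=
      { carrier := {x | b * x ∈ Submodule.span ℂ ((Set.univ : Set B) * S * Set.univ)}
        zero_mem' := by simp
        add_mem' := fun {x y} hx hy => by
          simpa only [Set.mem_setOf_eq, mul_add] using Submodule.add_mem _ hx hy
        smul_mem' := fun c x hx => by
          simpa only [Set.mem_setOf_eq, mul_smul_comm] using Submodule.smul_mem _ c hx }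
    intro z hz
    refine (Submodule.span_le (p := W)).mpr ?_ hz
    rintro t ⟨u, hu, v, -, rfl⟩
    rcases hu with ⟨w, -, s, hs, rfl⟩
    show b * (w * s * v) ∈ Submodule.span ℂ ((Set.univ : Set B) * S * Set.univ)
    have h : b * (w * s * v) = (b * w) * s * v := by simp only [mul_assoc]
    rw [h]
    exact Submodule.subset_span
      (Set.mul_mem_mul (Set.mul_mem_mul (Set.mem_univ _) hs) (Set.mem_univ v))
  exact hm.closure (continuous_const.mul continuous_id) hy

lemma idealGen_mul_right {S : Set B} (b : B) {y : B} (hy : y ∈ idealGen S) :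
    y * b ∈ idealGen S := by
  have hm : Set.MapsTo (fun z => z * b)
      (Submodule.span ℂ ((Set.univ : Set B) * S * Set.univ) : Set B)
      (Submodule.span ℂ ((Set.univ : Set B) * S * Set.univ) : Set B) := by
    let W : Submodule ℂ B :=
      { carrier := {x | x * b ∈ Submodule.span ℂ ((Set.univ : Set B) * S * Set.univ)}
        zero_mem' := by simp
        add_mem' := fun {x y} hx hy => by
          simpa only [Set.mem_setOf_eq, add_mul] using Submodule.add_mem _ hx hy
        smul_mem' := fun c x hx => by
          simpa only [Set.mem_setOf_eq, smul_mul_assoc] using Submodule.smul_mem _ c hx }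
    intro z hz
    refine (Submodule.span_le (p := W)).mpr ?_ hz
    rintro t ⟨u, hu, v, -, rfl⟩
    show (u * v) * b ∈ Submodule.span ℂ ((Set.univ : Set B) * S * Set.univ)
    have h : (u * v) * b = u * (v * b) := mul_assoc u v b
    rw [h]
    exact Submodule.subset_span (Set.mul_mem_mul hu (Set.mem_univ (v * b)))
  exact hm.closure (continuous_id.mul continuous_const) hy

lemma cube_mem_idealGen {S : Set B} {b : B} (hb : b ∈ S) : b * b * b ∈ idealGen S :=
  subset_closure (Submodule.subset_span
    (Set.mul_mem_mul (Set.mul_mem_mul (Set.mem_univ b) hb) (Set.mem_univ b)))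

/-- Under the ideal intersection property,
`Ann_B(⟨J ∩ A⟩_B) = Ann_B(J)` for every closed two-sided ideal `J` of `B`. -/
theorem stmt10 (A : Set B) (hA : ClosedStarSubalgebra A)
    (hiip : IdealIntersectionProperty A) :
    ∀ J : Set B, ClosedTwoSidedIdeal J →
      annB (idealGen (J ∩ A)) = annB J := by
  intro J hJ
  set S : Set B := J ∩ A with hS
  set I : Set B := idealGen S with hI
  have hIJ : I ⊆ J := by
    refine clSpan_subset hJ.zero_mem hJ.add_mem hJ.smul_mem hJ.isClosed ?_
    rintro t ⟨u, hu, v, -, rfl⟩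
    rcases hu with ⟨w, -, s, hs, rfl⟩
    exact hJ.mul_mem_right v (hJ.mul_mem_left w hs.1)
  ext x
  constructor
  · intro hx j hj
    set K : Set B := J ∩ annB I with hK
    have hKideal : ClosedTwoSidedIdeal K := by
      constructor
      · exact hJ.isClosed.inter (isClosed_annB I)
      · exact ⟨hJ.zero_mem, fun s _ => ⟨zero_mul s, mul_zero s⟩⟩
      · rintro y z ⟨hyJ, hyA⟩ ⟨hzJ, hzA⟩
        refine ⟨hJ.add_mem hyJ hzJ, fun s hs => ?_⟩
        constructor
        · rw [add_mul, (hyA s hs).1, (hzA s hs).1, add_zero]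
        · rw [mul_add, (hyA s hs).2, (hzA s hs).2, add_zero]
      · rintro c y ⟨hyJ, hyA⟩
        refine ⟨hJ.smul_mem c hyJ, fun s hs => ?_⟩
        constructor
        · rw [smul_mul_assoc, (hyA s hs).1, smul_zero]
        · rw [mul_smul_comm, (hyA s hs).2, smul_zero]
      · rintro a y ⟨hyJ, hyA⟩
        refine ⟨hJ.mul_mem_left a hyJ, fun s hs => ?_⟩
        constructor
        · rw [mul_assoc, (hyA s hs).1, mul_zero]
        · rw [← mul_assoc]
          exact (hyA _ (idealGen_mul_right a hs)).2
      · rintro a y ⟨hyJ, hyA⟩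
        refine ⟨hJ.mul_mem_right a hyJ, fun s hs => ?_⟩
        constructor
        · rw [mul_assoc]
          exact (hyA _ (idealGen_mul_left a hs)).1
        · rw [← mul_assoc, (hyA s hs).2, zero_mul]
    have hK0 : ∀ z ∈ K, z = 0 := by
      intro z hz
      by_contra hz0
      have hKne : K ≠ {0} := by
        intro h
        exact hz0 (by rwa [h, Set.mem_singleton_iff] at hz)
      have hKA := hiip K hKideal hKne
      obtain ⟨a, haKA, ha0⟩ : ∃ a, a ∈ K ∩ A ∧ a ≠ 0 := by
        by_contra h
        push_neg at h
        exact hKA (Set.eq_singleton_iff_unique_mem.mpr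
          ⟨⟨hKideal.zero_mem, hA.zero_mem⟩, fun a ha => h a ha⟩)
      obtain ⟨haK, haA⟩ := haKA
      obtain ⟨b, hb⟩ : ∃ b : B, b = star a * a := ⟨_, rfl⟩
      have hbK : b ∈ K := by
        rcases haK with ⟨haJ, haAnn⟩
        rw [hb]
        refine ⟨hJ.mul_mem_left (star a) haJ, fun s hs => ?_⟩
        constructor
        · rw [mul_assoc, (haAnn s hs).1, mul_zero]
        · rw [← mul_assoc]
          exact (haAnn _ (idealGen_mul_right (star a) hs)).2
      have hbA : b ∈ A := by rw [hb]; exact hA.mul_mem (hA.star_mem haA) haA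
      have hbS : b ∈ S := ⟨hbK.1, hbA⟩
      have hb3 : b * b * b ∈ I := cube_mem_idealGen hbS
      have hb4 : b * (b * b * b) = 0 := (hbK.2 _ hb3).1
      have hbsa : star b = b := by rw [hb, star_mul, star_star]
      have hnb : ‖b‖ = ‖a‖ * ‖a‖ := by rw [hb]; exact CStarRing.norm_star_mul_self
      have hnb2 : ‖b * b‖ = ‖b‖ * ‖b‖ := by
        calc ‖b * b‖ = ‖star b * b‖ := by rw [hbsa]
          _ = ‖b‖ * ‖b‖ := CStarRing.norm_star_mul_self
      have hbbsa : star (b * b) = b * b := by rw [star_mul, hbsa]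
      have hnb4 : ‖(b * b) * (b * b)‖ = ‖b * b‖ * ‖b * b‖ := by
        calc ‖(b * b) * (b * b)‖ = ‖star (b * b) * (b * b)‖ := by rw [hbbsa]
          _ = ‖b * b‖ * ‖b * b‖ := CStarRing.norm_star_mul_self
      have hzero : (b * b) * (b * b) = 0 := by
        rw [← hb4]; simp only [mul_assoc]
      rw [hzero, norm_zero] at hnb4
      have hbb0 : ‖b * b‖ = 0 := by nlinarith [norm_nonneg (b * b)]
      rw [hbb0] at hnb2
      have hb0 : ‖b‖ = 0 := by nlinarith [norm_nonneg b]
      rw [hnb] at hb0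
      have : ‖a‖ = 0 := by nlinarith [norm_nonneg a]
      exact ha0 (norm_eq_zero.mp this)
    constructor
    · refine hK0 (x * j) ⟨hJ.mul_mem_left x hj, fun s hs => ?_⟩
      constructor
      · rw [mul_assoc]
        exact (hx _ (idealGen_mul_left j hs)).1
      · rw [← mul_assoc, (hx s hs).2, zero_mul]
    · refine hK0 (j * x) ⟨hJ.mul_mem_right x hj, fun s hs => ?_⟩
      constructor
      · rw [mul_assoc, (hx s hs).1, mul_zero]
      · rw [← mul_assoc]
        exact (hx _ (idealGen_mul_right j hs)).2
  · intro hx i hi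
    exact hx i (hIJ hi)
end

section
/- Let B be a C*-algebra and A a closed *-subalgebra satisfying the ideal intersection property and axiom (inv). Then for every regular ideal J of B, the ideal J ∩ A is a regular ideal of A, i.e. Ann_A(Ann_A(J ∩ A)) = J ∩ A. -/
open Pointwise

variable {B : Type*} [NonUnitalCStarAlgebra B]

/-!
For a closed ideal `L` of `B`, axiom (inv) makes `M = [(L ∩ A) B] = [B (L ∩ A)]` a closed ideal,
and anything annihilating `L ∩ A` annihilates `M`. The ideal `L ∩ Ann(M)` meets `A` trivially
(an element `a` there kills `a a^*` ∈ `M`, so `a = 0` by the C*-identity), hence vanishes by the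
ideal intersection property. Consequently `Ann(L ∩ A) = Ann(L)`; applying this to `L = J` and
to `L = Ann(J)` gives `Ann_A(Ann_A(J ∩ A)) = A ∩ Ann(Ann(J)) = J ∩ A`.
-/

lemma subset_clSpan (S : Set B) : S ⊆ clSpan S :=
  Submodule.subset_span.trans subset_closure

lemma clSpan_subset_s12 {S : Set B} {K : Submodule ℂ B} (hK : IsClosed (K : Set B)) (h : S ⊆ K) :
    clSpan S ⊆ K :=
  closure_minimal (Submodule.span_le.mpr h) hK

lemma mapsTo_clSpan (f : B →L[ℂ] B) {S T : Set B} (h : Set.MapsTo f S (clSpan T)) :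
    Set.MapsTo f (clSpan S) (clSpan T) := by
  rw [clSpan, ← Submodule.topologicalClosure_coe] at h ⊢
  exact clSpan_subset_s12 (K := (Submodule.span ℂ T).topologicalClosure.comap (f : B →ₗ[ℂ] B))
    ((Submodule.isClosed_topologicalClosure _).preimage f.continuous) h

lemma mul_eq_zero_of_mem_clSpan_right {x : B} {S : Set B} (h : ∀ s ∈ S, x * s = 0) :
    ∀ y ∈ clSpan S, x * y = 0 :=
  clSpan_subset_s12 (ContinuousLinearMap.mul ℂ B x).isClosed_ker h

lemma mul_eq_zero_of_mem_clSpan_left {x : B} {S : Set B} (h : ∀ s ∈ S, s * x = 0) :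
    ∀ y ∈ clSpan S, y * x = 0 :=
  clSpan_subset_s12 ((ContinuousLinearMap.mul ℂ B).flip x).isClosed_ker h

lemma annB_anti {S T : Set B} (h : S ⊆ T) : annB T ⊆ annB S :=
  fun _ hx s hs => hx s (h hs)

lemma annIn_eq_inter_annB (A S : Set B) : annIn A S = A ∩ annB S := rfl

lemma closedTwoSidedIdeal_inter {I J : Set B} (hI : ClosedTwoSidedIdeal I)
    (hJ : ClosedTwoSidedIdeal J) : ClosedTwoSidedIdeal (I ∩ J) where
  isClosed := hI.isClosed.inter hJ.isClosed
  zero_mem := ⟨hI.zero_mem, hJ.zero_mem⟩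
  add_mem _ _ hx hy := ⟨hI.add_mem hx.1 hy.1, hJ.add_mem hx.2 hy.2⟩
  smul_mem c _ hx := ⟨hI.smul_mem c hx.1, hJ.smul_mem c hx.2⟩
  mul_mem_left a _ hx := ⟨hI.mul_mem_left a hx.1, hJ.mul_mem_left a hx.2⟩
  mul_mem_right a _ hx := ⟨hI.mul_mem_right a hx.1, hJ.mul_mem_right a hx.2⟩

lemma closedTwoSidedIdeal_annB {M : Set B} (hM : ClosedTwoSidedIdeal M) :
    ClosedTwoSidedIdeal (annB M) where
  isClosed := isClosed_annB M
  zero_mem s _ := ⟨zero_mul s, mul_zero s⟩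
  add_mem x y hx hy s hs := by
    obtain ⟨hx₁, hx₂⟩ := hx s hs
    obtain ⟨hy₁, hy₂⟩ := hy s hs
    exact ⟨by rw [add_mul, hx₁, hy₁, add_zero], by rw [mul_add, hx₂, hy₂, add_zero]⟩
  smul_mem c x hx s hs := by
    obtain ⟨hx₁, hx₂⟩ := hx s hs
    exact ⟨by rw [smul_mul_assoc, hx₁, smul_zero], by rw [mul_smul_comm, hx₂, smul_zero]⟩
  mul_mem_left a x hx s hs :=
    ⟨by rw [mul_assoc, (hx s hs).1, mul_zero],
      by rw [← mul_assoc]; exact (hx (s * a) (hM.mul_mem_right a hs)).2⟩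
  mul_mem_right a x hx s hs :=
    ⟨by rw [mul_assoc]; exact (hx (a * s) (hM.mul_mem_left a hs)).1,
      by rw [← mul_assoc, (hx s hs).2, zero_mul]⟩

namespace BInvariant

variable {S : Set B}

lemma closedTwoSidedIdeal (hS : BInvariant S) :
    ClosedTwoSidedIdeal (clSpan (S * Set.univ)) := by
  have hK := (Submodule.span ℂ (S * Set.univ)).topologicalClosure_coe
  refine
  { isClosed := isClosed_closure
    zero_mem := subset_closure (Submodule.zero_mem _)
    add_mem := fun x y hx hy => ?_
    smul_mem := fun c x hx => ?_
    mul_mem_left := fun a x hx => ?_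
    mul_mem_right := fun a x hx => ?_ }
  · rw [clSpan, ← hK] at hx hy ⊢
    exact Submodule.add_mem _ hx hy
  · rw [clSpan, ← hK] at hx ⊢
    exact Submodule.smul_mem _ c hx
  · rw [hS] at hx ⊢
    refine mapsTo_clSpan (ContinuousLinearMap.mul ℂ B a) ?_ hx
    rintro _ ⟨b, -, s, hs, rfl⟩
    simpa only [ContinuousLinearMap.mul_apply', ← mul_assoc] using
      subset_clSpan _ (Set.mul_mem_mul (Set.mem_univ (a * b)) hs)
  · refine mapsTo_clSpan ((ContinuousLinearMap.mul ℂ B).flip a) ?_ hx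
    rintro _ ⟨s, hs, b, -, rfl⟩
    simpa only [ContinuousLinearMap.flip_apply, ContinuousLinearMap.mul_apply', mul_assoc] using
      subset_clSpan _ (Set.mul_mem_mul hs (Set.mem_univ (b * a)))

lemma annB_subset (hS : BInvariant S) : annB S ⊆ annB (clSpan (S * Set.univ)) := by
  intro x hx m hm
  refine ⟨mul_eq_zero_of_mem_clSpan_right ?_ m hm,
    mul_eq_zero_of_mem_clSpan_left ?_ m (hS ▸ hm)⟩
  · rintro _ ⟨s, hs, b, -, rfl⟩
    rw [← mul_assoc, (hx s hs).1, zero_mul]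
  · rintro _ ⟨b, -, s, hs, rfl⟩
    rw [mul_assoc, (hx s hs).2, mul_zero]

end BInvariant

lemma eq_zero_of_mem_annB_clSpan_mul_univ {S : Set B} {a : B} (ha : a ∈ S)
    (haM : a ∈ annB (clSpan (S * Set.univ))) : a = 0 := by
  have hc : a * star a ∈ clSpan (S * Set.univ) :=
    subset_clSpan _ (Set.mul_mem_mul ha (Set.mem_univ _))
  have hca : a * star a * a = 0 := (haM _ hc).2
  rw [← CStarRing.mul_star_self_eq_zero_iff, ← CStarRing.star_mul_self_eq_zero_iff, star_mul,
    star_star, ← mul_assoc, hca, zero_mul]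

theorem annB_inter_eq {A L : Set B} (hA : (0 : B) ∈ A) (hiip : IdealIntersectionProperty A)
    (hinv : AxiomInv A) (hL : ClosedTwoSidedIdeal L) : annB (L ∩ A) = annB L := by
  refine subset_antisymm (fun x hx => ?_) (annB_anti Set.inter_subset_left)
  set M := clSpan ((L ∩ A) * Set.univ)
  have hM : ClosedTwoSidedIdeal (annB M) :=
    closedTwoSidedIdeal_annB (hinv L hL).closedTwoSidedIdeal
  have hD : ClosedTwoSidedIdeal (L ∩ annB M) := closedTwoSidedIdeal_inter hL hM
  have hDA : L ∩ annB M ∩ A = {0} := by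
    refine Set.Subset.antisymm ?_
      (Set.singleton_subset_iff.mpr ⟨⟨hL.zero_mem, hM.zero_mem⟩, hA⟩)
    rintro a ⟨⟨haL, haM⟩, haA⟩
    exact eq_zero_of_mem_annB_clSpan_mul_univ (S := L ∩ A) ⟨haL, haA⟩ haM
  have hD0 : L ∩ annB M = {0} := not_not.mp fun h => hiip _ hD h hDA
  have hxM : x ∈ annB M := (hinv L hL).annB_subset hx
  intro l hl
  exact ⟨hD0.subset ⟨hL.mul_mem_left x hl, hM.mul_mem_right l hxM⟩,
    hD0.subset ⟨hL.mul_mem_right x hl, hM.mul_mem_left l hxM⟩⟩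

/-- Under the ideal intersection property and axiom (inv), `J ∩ A` is a regular
ideal of `A` for every regular ideal `J` of `B`. -/
theorem stmt12 (A : Set B) (hA : ClosedStarSubalgebra A)
    (hiip : IdealIntersectionProperty A) (hinv : AxiomInv A) :
    ∀ J : Set B, RegularIdealB J →
      annIn A (annIn A (J ∩ A)) = J ∩ A := by
  rintro J ⟨hJ, hreg⟩
  rw [annIn_eq_inter_annB A (J ∩ A), annB_inter_eq hA.zero_mem hiip hinv hJ, annIn_eq_inter_annB,
    Set.inter_comm A (annB J), annB_inter_eq hA.zero_mem hiip hinv (closedTwoSidedIdeal_annB hJ),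
    hreg, Set.inter_comm]
end

section
/- Let A be a regular subalgebra of a C*-algebra B (the normalizers of A span a dense subspace of B and A contains an approximate unit for B). If I is a normalizer-invariant closed two-sided ideal of A (nIn* ⊆ I for every normalizer n), then I is B-invariant, i.e. the closed linear span [BI] equals [IB]. -/
open Pointwise

variable {B : Type*} [NonUnitalCStarAlgebra B]

/-!
For `x ∈ I` and a normalizer `n`, normalizer invariance applied to `n⋆` puts
`(x n)⋆ (x n) = n⋆ (x⋆ x) n` in `I`. If `b⋆ b` lies in a closed subalgebra `S`, then `b` is a limit
of elements `b c` with `c ∈ S`: taking `c = g (b⋆ b)` for a continuous cut-off `g` with `g 0 = 0`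
and `g = 1` away from `0`, the C⋆-identity gives `‖b - b c‖² = ‖(b⋆ b) (1 - c)²‖`, which is small.
Hence `x n ∈ [BI]`, and since the normalizers span a dense subspace, `x b ∈ [BI]` for every `b`.
This gives `[IB] ⊆ [BI]`; the other inclusion is the mirror image.
-/

lemma exists_continuous_abs_mul_one_sub_sq_le {δ : ℝ} (hδ : 0 < δ) :
    ∃ g : ℝ → ℝ, Continuous g ∧ g 0 = 0 ∧ ∀ t, |t * (1 - g t) ^ 2| ≤ δ := by
  refine ⟨fun t => min (|t| / δ) 1, by fun_prop, by simp, fun t => ?_⟩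
  rw [abs_mul, abs_pow]
  dsimp only
  rcases le_or_gt |t| δ with ht | ht
  · have h0 : 0 ≤ min (|t| / δ) 1 := le_min (by positivity) zero_le_one
    have h1 : |1 - min (|t| / δ) 1| ≤ 1 :=
      abs_le.2 ⟨by linarith [min_le_right (|t| / δ) 1], by linarith⟩
    calc |t| * |1 - min (|t| / δ) 1| ^ 2 ≤ δ * 1 ^ 2 := by gcongr
      _ = δ := by ring
  · rw [min_eq_right ((one_le_div hδ).2 ht.le)]
    simp [hδ.le]

lemma cfcₙ_mul_one_sub_sq {a : B} (ha : IsSelfAdjoint a) {g : ℝ → ℝ} (hg : Continuous g)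
    (hg0 : g 0 = 0) :
    cfcₙ (fun t => t * (1 - g t) ^ 2) a =
      a - cfcₙ g a * a - a * cfcₙ g a + cfcₙ g a * a * cfcₙ g a := by
  rw [show (fun t => t * (1 - g t) ^ 2) = fun t => t - g t * t - t * g t + g t * t * g t by
    ext t; ring]
  rw [cfcₙ_add .., cfcₙ_sub .., cfcₙ_sub .., cfcₙ_mul (fun t => g t * t) g a,
    cfcₙ_mul g (fun t => t) a, cfcₙ_mul (fun t => t) g a, cfcₙ_id' ℝ a]

def NonUnitalSubalgebra.starCore (S : NonUnitalSubalgebra ℂ B) : NonUnitalStarSubalgebra ℂ B :=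
  { S ⊓ star S with
    star_mem' := fun {x} hx => ⟨(S.mem_star_iff x).1 hx.2, (S.star_mem_star_iff x).2 hx.1⟩ }

lemma NonUnitalSubalgebra.cfcₙ_mem {S : NonUnitalSubalgebra ℂ B} (hS : IsClosed (S : Set B))
    {a : B} (ha : a ∈ S) (hsa : IsSelfAdjoint a) (f : ℝ → ℝ) : cfcₙ f a ∈ S := by
  have hcl : IsClosed (S.starCore : Set B) := hS.inter (hS.preimage continuous_star)
  have haS : a ∈ S.starCore := ⟨ha, by simpa [S.mem_star_iff, hsa.star_eq] using ha⟩
  exact (_root_.cfcₙ_mem (𝕜 := ℝ) (s := S.starCore) (hs := hcl) f haS).1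

lemma exists_isSelfAdjoint_mem_norm_sub_mul_lt {S : NonUnitalSubalgebra ℂ B}
    (hS : IsClosed (S : Set B)) {b : B} (hb : star b * b ∈ S) {ε : ℝ} (hε : 0 < ε) :
    ∃ c ∈ S, IsSelfAdjoint c ∧ ‖b - b * c‖ < ε := by
  have ha : IsSelfAdjoint (star b * b) := .star_mul_self b
  obtain ⟨g, hg, hg0, hbound⟩ :=
    exists_continuous_abs_mul_one_sub_sq_le (show 0 < ε ^ 2 / 2 by positivity)
  have hc : IsSelfAdjoint (cfcₙ g (star b * b)) := cfcₙ_predicate g _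
  refine ⟨cfcₙ g (star b * b), S.cfcₙ_mem hS hb ha g, hc, ?_⟩
  have hsq : ‖b - b * cfcₙ g (star b * b)‖ * ‖b - b * cfcₙ g (star b * b)‖ ≤ ε ^ 2 / 2 := by
    rw [← CStarRing.norm_star_mul_self]
    calc _ = ‖cfcₙ (fun t => t * (1 - g t) ^ 2) (star b * b)‖ := by
          rw [cfcₙ_mul_one_sub_sq ha hg hg0, star_sub, star_mul, hc.star_eq]
          noncomm_ring
      _ ≤ ε ^ 2 / 2 := norm_cfcₙ_le fun t _ => hbound t
  nlinarith [norm_nonneg (b - b * cfcₙ g (star b * b))]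

lemma clSpan_eq_topologicalClosure (S : Set B) :
    clSpan S = ((Submodule.span ℂ S).topologicalClosure : Set B) :=
  (Submodule.topologicalClosure_coe _).symm

lemma isClosed_clSpan (S : Set B) : IsClosed (clSpan S) := isClosed_closure

lemma clSpan_subset_clSpan {S T : Set B} (h : S ⊆ clSpan T) : clSpan S ⊆ clSpan T := by
  refine closure_minimal ?_ (isClosed_clSpan T)
  rw [clSpan_eq_topologicalClosure] at h ⊢
  exact Submodule.span_le.2 h

lemma map_mem_clSpan_of_clSpan_eq_univ {S T : Set B} (hS : clSpan S = Set.univ)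
    (f : B →L[ℂ] B) (h : ∀ s ∈ S, f s ∈ clSpan T) (b : B) : f b ∈ clSpan T := by
  rw [clSpan_eq_topologicalClosure] at h
  have hspan : Submodule.span ℂ S ≤
      (Submodule.span ℂ T).topologicalClosure.comap (f : B →ₗ[ℂ] B) :=
    Submodule.span_le.2 h
  have hsub : clSpan S ⊆ f ⁻¹' ((Submodule.span ℂ T).topologicalClosure : Set B) :=
    closure_minimal hspan ((Submodule.isClosed_topologicalClosure _).preimage f.continuous)
  rw [clSpan_eq_topologicalClosure]
  exact hsub (hS ▸ Set.mem_univ b)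

lemma mem_clSpan_univ_mul_of_star_mul_self_mem {S : NonUnitalSubalgebra ℂ B}
    (hS : IsClosed (S : Set B)) {b : B} (hb : star b * b ∈ S) :
    b ∈ clSpan (Set.univ * (S : Set B)) := by
  refine Metric.mem_closure_iff.2 fun ε hε => ?_
  obtain ⟨c, hcS, -, hc⟩ := exists_isSelfAdjoint_mem_norm_sub_mul_lt hS hb hε
  exact ⟨b * c, Submodule.subset_span (Set.mul_mem_mul (Set.mem_univ b) hcS),
    by rwa [dist_eq_norm]⟩

lemma mem_clSpan_mul_univ_of_mul_star_self_mem {S : NonUnitalSubalgebra ℂ B}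
    (hS : IsClosed (S : Set B)) {b : B} (hb : b * star b ∈ S) :
    b ∈ clSpan ((S : Set B) * Set.univ) := by
  refine Metric.mem_closure_iff.2 fun ε hε => ?_
  obtain ⟨c, hcS, hcsa, hc⟩ :=
    exists_isSelfAdjoint_mem_norm_sub_mul_lt hS (b := star b) (by rwa [star_star]) hε
  refine ⟨c * b, Submodule.subset_span (Set.mul_mem_mul hcS (Set.mem_univ b)), ?_⟩
  rwa [dist_eq_norm, ← norm_star, star_sub, star_mul, hcsa.star_eq]

def IdealOf.toNonUnitalSubalgebra {A I : Set B} (hI : IdealOf A I) :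
    NonUnitalSubalgebra ℂ B where
  carrier := I
  add_mem' := fun hx hy => hI.add_mem hx hy
  zero_mem' := hI.zero_mem
  mul_mem' := fun hx hy => hI.mul_mem_left (hI.subset hx) hy
  smul_mem' := hI.smul_mem

lemma IsNormalizer.star {A : Set B} {n : B} (hn : IsNormalizer A n) : IsNormalizer A (star n) :=
  ⟨fun a ha => by simpa using hn.2 a ha, fun a ha => by simpa using hn.1 a ha⟩

section NormalizerInvariant

variable {A I : Set B} (hA : ClosedStarSubalgebra A) (hI : IdealOf A I)
  (hnorm : ∀ n : B, IsNormalizer A n → ∀ x ∈ I, n * x * star n ∈ I)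
include hA hI hnorm

lemma mul_normalizer_mem_clSpan_univ_mul {x n : B} (hx : x ∈ I) (hn : IsNormalizer A n) :
    x * n ∈ clSpan (Set.univ * I) := by
  have hxx : star x * x ∈ I := hI.mul_mem_left (hA.star_mem (hI.subset hx)) hx
  have h : star (x * n) * (x * n) = star n * (star x * x) * star (star n) := by
    rw [star_mul, star_star]; noncomm_ring
  exact mem_clSpan_univ_mul_of_star_mul_self_mem (S := hI.toNonUnitalSubalgebra) hI.isClosed
    (h ▸ hnorm _ hn.star _ hxx)

lemma normalizer_mul_mem_clSpan_mul_univ {x n : B} (hx : x ∈ I) (hn : IsNormalizer A n) :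
    n * x ∈ clSpan (I * Set.univ) := by
  have hxx : x * star x ∈ I := hI.mul_mem_right (hA.star_mem (hI.subset hx)) hx
  have h : n * x * star (n * x) = n * (x * star x) * star n := by
    rw [star_mul]; noncomm_ring
  exact mem_clSpan_mul_univ_of_mul_star_self_mem (S := hI.toNonUnitalSubalgebra) hI.isClosed
    (h ▸ hnorm _ hn _ hxx)

end NormalizerInvariant

/-- If `A` is a regular subalgebra of `B`, then every normalizer-invariant
closed two-sided ideal of `A` is `B`-invariant. -/
theorem stmt15 (A : Set B) (hreg : RegularSubalgebra A)
    (I : Set B) (hI : IdealOf A I)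
    (hnorm : ∀ n : B, IsNormalizer A n → ∀ x ∈ I, n * x * star n ∈ I) :
    BInvariant I := by
  obtain ⟨hA, hdense, -⟩ := hreg
  apply Set.Subset.antisymm
  · refine clSpan_subset_clSpan ?_
    rintro _ ⟨x, hx, b, -, rfl⟩
    exact map_mem_clSpan_of_clSpan_eq_univ hdense (ContinuousLinearMap.mul ℂ B x)
      (fun n hn => mul_normalizer_mem_clSpan_univ_mul hA hI hnorm hx hn) b
  · refine clSpan_subset_clSpan ?_
    rintro _ ⟨b, -, x, hx, rfl⟩
    exact map_mem_clSpan_of_clSpan_eq_univ hdense ((ContinuousLinearMap.mul ℂ B).flip x)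
      (fun n hn => normalizer_mul_mem_clSpan_mul_univ hA hI hnorm hx hn) b
end
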